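/- arXiv:2512.21198 — 3 statements merged into one kernel-verified Lean document; each statement's English description precedes it below -/
import Mathlib

section
/- Let q, n ≥ 1, H ∈ ℝ^{q×n}, h ∈ ℝ^q, r ∈ ℝ^q, λ ∈ ℝ, and M ∈ ℝ^{n×n}. Suppose there exists an entrywise nonnegative matrix P ∈ ℝ^{q×q} such that P·H = H·M and P·h ≤ λ·h − r componentwise. Then for every e ∈ ℝⁿ with H·e ≤ h componentwise and every d ∈ ℝⁿ with H·d ≤ r componentwise, one has H·(M·e + d) ≤ λ·h componentwise, i.e., M·e + d ∈ P(H, λh). If moreover 0 < λ ≤ 1 and h ≥ 0 componentwise, then also M·e + d ∈ P(H, h). -/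
namespace Matrix

variable {R m n : Type*} [Fintype n]

lemma mulVec_le_mulVec_of_nonneg [Semiring R] [PartialOrder R] [IsOrderedRing R]
    {P : Matrix m n R} (hP : ∀ i j, 0 ≤ P i j) {u v : n → R} (huv : u ≤ v) :
    P *ᵥ u ≤ P *ᵥ v :=
  fun i => dotProduct_le_dotProduct_of_nonneg_left huv (hP i)

variable [Fintype m] [CommRing R] [PartialOrder R] [IsOrderedRing R]

lemma mulVec_mulVec_add_le_smul_of_dual {H : Matrix m n R} {M : Matrix n n R}
    {P : Matrix m m R} (hP : ∀ i j, 0 ≤ P i j) (hPH : P * H = H * M) {h r : m → R} {c : R}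
    (hPh : P *ᵥ h ≤ c • h - r) {e d : n → R} (he : H *ᵥ e ≤ h) (hd : H *ᵥ d ≤ r) :
    H *ᵥ (M *ᵥ e + d) ≤ c • h :=
  calc H *ᵥ (M *ᵥ e + d) = P *ᵥ (H *ᵥ e) + H *ᵥ d := by
        rw [mulVec_add, mulVec_mulVec, ← hPH, ← mulVec_mulVec]
    _ ≤ P *ᵥ h + r := add_le_add (mulVec_le_mulVec_of_nonneg hP he) hd
    _ ≤ c • h := le_sub_iff_add_le.mp hPh

lemma mulVec_mulVec_add_le_of_dual {H : Matrix m n R} {M : Matrix n n R}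
    {P : Matrix m m R} (hP : ∀ i j, 0 ≤ P i j) (hPH : P * H = H * M) {h r : m → R} {c : R}
    (hPh : P *ᵥ h ≤ c • h - r) (hc : c ≤ 1) (hh : 0 ≤ h) {e d : n → R} (he : H *ᵥ e ≤ h)
    (hd : H *ᵥ d ≤ r) :
    H *ᵥ (M *ᵥ e + d) ≤ h :=
  (mulVec_mulVec_add_le_smul_of_dual hP hPH hPh he hd).trans
    fun j => mul_le_of_le_one_left (hh j) hc

end Matrix

theorem stmt_0_general (q n : ℕ)
    (H : Matrix (Fin q) (Fin n) ℝ) (h r : Fin q → ℝ) (lam : ℝ)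
    (M : Matrix (Fin n) (Fin n) ℝ) (P : Matrix (Fin q) (Fin q) ℝ)
    (hP : ∀ i j, 0 ≤ P i j)
    (hPH : P * H = H * M)
    (hPh : ∀ j, P.mulVec h j ≤ lam * h j - r j) :
    (∀ e d : Fin n → ℝ, (∀ j, H.mulVec e j ≤ h j) → (∀ j, H.mulVec d j ≤ r j) →
        ∀ j, H.mulVec (M.mulVec e + d) j ≤ lam * h j) ∧
    (0 < lam → lam ≤ 1 → (∀ j, 0 ≤ h j) →
      ∀ e d : Fin n → ℝ, (∀ j, H.mulVec e j ≤ h j) → (∀ j, H.mulVec d j ≤ r j) →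
        ∀ j, H.mulVec (M.mulVec e + d) j ≤ h j) :=
  ⟨fun _ _ he hd => Matrix.mulVec_mulVec_add_le_smul_of_dual hP hPH hPh he hd,
    fun _ hlam hh _ _ he hd => Matrix.mulVec_mulVec_add_le_of_dual hP hPH hPh hlam hh he hd⟩

/-- A nonnegative dual matrix `P` with `P·H = H·M` and
`P·h ≤ λ·h − r` certifies that the polytope `P(H,h)` is mapped into
`P(H, λh)` by the perturbed dynamics `e ↦ M·e + d` for any `d` with
`H·d ≤ r`; if moreover `0 < λ ≤ 1` and `h ≥ 0`, the image stays in `P(H,h)`. -/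
theorem stmt_0 (q n : ℕ) (hq : 1 ≤ q) (hn : 1 ≤ n)
    (H : Matrix (Fin q) (Fin n) ℝ) (h r : Fin q → ℝ) (lam : ℝ)
    (M : Matrix (Fin n) (Fin n) ℝ) (P : Matrix (Fin q) (Fin q) ℝ)
    (hP : ∀ i j, 0 ≤ P i j)
    (hPH : P * H = H * M)
    (hPh : ∀ j, P.mulVec h j ≤ lam * h j - r j) :
    (∀ e d : Fin n → ℝ, (∀ j, H.mulVec e j ≤ h j) → (∀ j, H.mulVec d j ≤ r j) →
        ∀ j, H.mulVec (M.mulVec e + d) j ≤ lam * h j) ∧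
    (0 < lam → lam ≤ 1 → (∀ j, 0 ≤ h j) →
      ∀ e d : Fin n → ℝ, (∀ j, H.mulVec e j ≤ h j) → (∀ j, H.mulVec d j ≤ r j) →
        ∀ j, H.mulVec (M.mulVec e + d) j ≤ h j) :=
  stmt_0_general q n H h r lam M P hP hPH hPh
end

section
/- Let n, m ≥ 1, Ā ∈ ℝ^{n×n}, B̄ ∈ ℝ^{n×m}, let X, E, E' ⊆ ℝⁿ and U, F, F' ⊆ ℝ^m be sets with E' ⊆ E and F' ⊆ F, let T ⊆ ℝⁿ, and let N ≥ 1. Assume the terminal conditions: for every x ∈ T, (i) {x} + E' ⊆ X (Minkowski sum), and (ii) there exists u ∈ ℝ^m with {u} + F' ⊆ U and Ā·x + B̄·u ∈ T. Suppose there exist x̄ : {0,…,N} → ℝⁿ and ū : {0,…,N−1} → ℝ^m satisfying x̄(k+1) = Ā·x̄(k) + B̄·ū(k), {x̄(k)} + E ⊆ X, and {ū(k)} + F ⊆ U for all 0 ≤ k ≤ N−1, and x̄(N) ∈ T. Then there exist x̃ : {0,…,N} → ℝⁿ and ũ : {0,…,N−1} → ℝ^m with x̃(0) = x̄(1), x̃(k+1)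 = Ā·x̃(k) + B̄·ũ(k), {x̃(k)} + E' ⊆ X and {ũ(k)} + F' ⊆ U for all 0 ≤ k ≤ N−1, and x̃(N) ∈ T. -/
/-!
The shifted candidate drops the first step of the old plan and appends one step inside the
terminal set, driven by the input that the invariance of `T` provides. Every tightened tube
constraint `{x} + E' ⊆ X` follows from the old one because `E' ⊆ E`, and the appended state,
lying in `T`, satisfies it by the terminal condition.
-/

open Pointwise

namespace TubeMPC

variable {α β : Type*}

structure IsFeasible (f : α → β → α) (S : Set α) (I : Set β) (T : Set α) (N : ℕ)
    (x : ℕ → α) (u : ℕ → β) : Prop where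
  dyn : ∀ k < N, x (k + 1) = f (x k) (u k)
  state_mem : ∀ k < N, x k ∈ S
  input_mem : ∀ k < N, u k ∈ I
  terminal_mem : x N ∈ T

def IsTerminalSet (f : α → β → α) (S : Set α) (I : Set β) (T : Set α) : Prop :=
  ∀ x ∈ T, x ∈ S ∧ ∃ u ∈ I, f x u ∈ T

namespace IsFeasible

variable {f : α → β → α} {S S' : Set α} {I I' : Set β} {T : Set α} {N : ℕ}
  {x : ℕ → α} {u : ℕ → β}

theorem mono (h : IsFeasible f S I T N x u) (hS : S ⊆ S') (hI : I ⊆ I') :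
    IsFeasible f S' I' T N x u where
  dyn := h.dyn
  state_mem k hk := hS (h.state_mem k hk)
  input_mem k hk := hI (h.input_mem k hk)
  terminal_mem := h.terminal_mem

theorem exists_shift (h : IsFeasible f S I T N x u) (hT : IsTerminalSet f S I T) (hN : 1 ≤ N) :
    ∃ (x' : ℕ → α) (u' : ℕ → β), x' 0 = x 1 ∧ IsFeasible f S I T N x' u' := by
  obtain ⟨hxS, uN, huI, hfT⟩ := hT (x N) h.terminal_mem
  set x' := Function.update (fun k => x (k + 1)) N (f (x N) uN)
  set u' := Function.update (fun k => u (k + 1)) (N - 1) uN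
  have hx' : ∀ k ≠ N, x' k = x (k + 1) := fun k hk => Function.update_of_ne hk _ _
  have hu' : ∀ k ≠ N - 1, u' k = u (k + 1) := fun k hk => Function.update_of_ne hk _ _
  have hxN : x' N = f (x N) uN := Function.update_self ..
  have huN : u' (N - 1) = uN := Function.update_self ..
  refine ⟨x', u', hx' 0 (by omega), ⟨fun k hk => ?_, fun k hk => ?_, fun k hk => ?_, ?_⟩⟩
  · rw [hx' k hk.ne]
    rcases eq_or_ne k (N - 1) with rfl | hkN
    · rw [Nat.sub_add_cancel hN, hxN, huN]
    · rw [hx' (k + 1) (by omega), hu' k hkN]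
      exact h.dyn (k + 1) (by omega)
  · rw [hx' k hk.ne]
    rcases eq_or_ne (k + 1) N with hkN | hkN
    · exact hkN ▸ hxS
    · exact h.state_mem (k + 1) (by omega)
  · rcases eq_or_ne k (N - 1) with rfl | hkN
    · rwa [huN]
    · rw [hu' k hkN]
      exact h.input_mem (k + 1) (by omega)
  · rwa [hxN]

end IsFeasible

theorem antitone_setOf_singleton_add_subset {G : Type*} [Add G] (X : Set G) :
    Antitone fun E : Set G => {x | {x} + E ⊆ X} :=
  fun _ _ hE _ hx => (Set.add_subset_add_left hE).trans hx

end TubeMPC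

open TubeMPC in
theorem stmt_3_general (n m : ℕ)
    (Abar : Matrix (Fin n) (Fin n) ℝ) (Bbar : Matrix (Fin n) (Fin m) ℝ)
    (X E E' : Set (Fin n → ℝ)) (U F F' : Set (Fin m → ℝ))
    (hE : E' ⊆ E) (hF : F' ⊆ F)
    (T : Set (Fin n → ℝ)) (N : ℕ) (hN : 1 ≤ N)
    (hterm : ∀ x ∈ T, ({x} + E' ⊆ X) ∧
      ∃ u : Fin m → ℝ, ({u} + F' ⊆ U) ∧
        Abar.mulVec x + Bbar.mulVec u ∈ T)
    (xbar : ℕ → Fin n → ℝ) (ubar : ℕ → Fin m → ℝ)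
    (hdyn : ∀ k, k ≤ N - 1 → xbar (k + 1) = Abar.mulVec (xbar k) + Bbar.mulVec (ubar k))
    (hX : ∀ k, k ≤ N - 1 → {xbar k} + E ⊆ X)
    (hU : ∀ k, k ≤ N - 1 → {ubar k} + F ⊆ U)
    (hT : xbar N ∈ T) :
    ∃ (xt : ℕ → Fin n → ℝ) (ut : ℕ → Fin m → ℝ),
      xt 0 = xbar 1 ∧
      (∀ k, k ≤ N - 1 → xt (k + 1) = Abar.mulVec (xt k) + Bbar.mulVec (ut k)) ∧
      (∀ k, k ≤ N - 1 → {xt k} + E' ⊆ X) ∧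
      (∀ k, k ≤ N - 1 → {ut k} + F' ⊆ U) ∧
      xt N ∈ T := by
  -- `N - 1` is truncated subtraction, so this needs `1 ≤ N`
  have hlt : ∀ k, k ≤ N - 1 ↔ k < N := by omega
  have hfeas : IsFeasible (fun x u => Abar.mulVec x + Bbar.mulVec u) {x | {x} + E ⊆ X}
      {u | {u} + F ⊆ U} T N xbar ubar :=
    ⟨fun k hk => hdyn k ((hlt k).2 hk), fun k hk => hX k ((hlt k).2 hk),
      fun k hk => hU k ((hlt k).2 hk), hT⟩
  obtain ⟨xt, ut, h0, hshift⟩ :=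
    (hfeas.mono (antitone_setOf_singleton_add_subset X hE)
      (antitone_setOf_singleton_add_subset U hF)).exists_shift hterm hN
  exact ⟨xt, ut, h0, fun k hk => hshift.dyn k ((hlt k).1 hk),
    fun k hk => hshift.state_mem k ((hlt k).1 hk), fun k hk => hshift.input_mem k ((hlt k).1 hk),
    hshift.terminal_mem⟩

/-- recursive feasibility induction step of the elastic
tube-based MPC: feasibility of the tightened constraints at one time step,
with an invariant terminal set satisfying the tightened constraints and
nested tubes `E' ⊆ E`, `F' ⊆ F`, implies feasibility at the next step via the
shifted candidate trajectory. -/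
theorem stmt_3 (n m : ℕ) (hn : 1 ≤ n) (hm : 1 ≤ m)
    (Abar : Matrix (Fin n) (Fin n) ℝ) (Bbar : Matrix (Fin n) (Fin m) ℝ)
    (X E E' : Set (Fin n → ℝ)) (U F F' : Set (Fin m → ℝ))
    (hE : E' ⊆ E) (hF : F' ⊆ F)
    (T : Set (Fin n → ℝ)) (N : ℕ) (hN : 1 ≤ N)
    (hterm : ∀ x ∈ T, ({x} + E' ⊆ X) ∧
      ∃ u : Fin m → ℝ, ({u} + F' ⊆ U) ∧
        Abar.mulVec x + Bbar.mulVec u ∈ T)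
    (xbar : ℕ → Fin n → ℝ) (ubar : ℕ → Fin m → ℝ)
    (hdyn : ∀ k, k ≤ N - 1 → xbar (k + 1) = Abar.mulVec (xbar k) + Bbar.mulVec (ubar k))
    (hX : ∀ k, k ≤ N - 1 → {xbar k} + E ⊆ X)
    (hU : ∀ k, k ≤ N - 1 → {ubar k} + F ⊆ U)
    (hT : xbar N ∈ T) :
    ∃ (xt : ℕ → Fin n → ℝ) (ut : ℕ → Fin m → ℝ),
      xt 0 = xbar 1 ∧
      (∀ k, k ≤ N - 1 → xt (k + 1) = Abar.mulVec (xt k) + Bbar.mulVec (ut k)) ∧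
      (∀ k, k ≤ N - 1 → {xt k} + E' ⊆ X) ∧
      (∀ k, k ≤ N - 1 → {ut k} + F' ⊆ U) ∧
      xt N ∈ T :=
  stmt_3_general n m Abar Bbar X E E' U F F' hE hF T N hN hterm xbar ubar hdyn hX hU hT
end

section
/- Let q, n ≥ 1, H ∈ ℝ^{q×n}, h ∈ ℝ^q with h_j > 0 for every j, suppose P(H,h) is bounded, and define V(e) := max_{1 ≤ j ≤ q} (H·e)_j / h_j. Let M : ℕ → ℝ^{n×n} and λ : ℕ → ℝ with 0 < λ(t) < 1 for all t, and suppose for every t there exists an entrywise nonnegative P(t) ∈ ℝ^{q×q} with P(t)·H = H·M(t) and P(t)·h ≤ λ(t)·h componentwise. Let λ̄ ∈ (0,1) satisfy λ(t) ≤ λ̄ for all t. If e : ℕ → ℝⁿ satisfies e(t+1) = M(t)·e(t) for all t, then for every t ∈ ℕ: V(e(t)) ≤ (∏_{k=0}^{t−1} λ(k))·V(e(0)) ≤ λ̄^t · V(e(0)). In particular V(e(t)) decays exponentially to zero. -/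
/-!
The gauge `V` satisfies `H e ≤ V(e) • h`, and `V(e) ≥ 0` because a negative gauge would put the
whole ray `ℝ≥0 • e` inside the bounded polyhedron. If `P ≥ 0`, `P H = H M` and `P h ≤ λ h`, then
`H (M e) = P (H e) ≤ V(e) • P h ≤ λ V(e) • h`, i.e. `V(M e) ≤ λ V(e)`; iterating along the
switching sequence gives the product bound, and `λ(k) ≤ λ̄` gives the geometric one.
-/

/-- The gauge `V(e) = max_j (H·e)_j / h_j` of the polyhedron `P(H,h)`. -/
noncomputable def polyGauge {q n : ℕ} (hq : 0 < q)
    (H : Matrix (Fin q) (Fin n) ℝ) (h : Fin q → ℝ) (e : Fin n → ℝ) : ℝ :=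
  Finset.univ.sup' ⟨⟨0, hq⟩, Finset.mem_univ _⟩ fun j => H.mulVec e j / h j

open Finset Matrix

theorem Matrix.mulVec_mono_of_nonneg {m n α : Type*} [Fintype n] [Semiring α] [PartialOrder α]
    [IsOrderedRing α] {A : Matrix m n α} (hA : ∀ i j, 0 ≤ A i j) {x y : n → α} (hxy : x ≤ y) :
    A *ᵥ x ≤ A *ᵥ y :=
  fun i => sum_le_sum fun j _ => mul_le_mul_of_nonneg_left (hxy j) (hA i j)

theorem eq_zero_of_isBounded_of_forall_smul_mem {E : Type*} [NormedAddCommGroup E]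
    [NormedSpace ℝ E] {s : Set E} (hs : Bornology.IsBounded s) {x : E}
    (hx : ∀ c : ℝ, 0 ≤ c → c • x ∈ s) : x = 0 := by
  obtain ⟨C, hC⟩ := hs.exists_norm_le
  by_contra hx0
  have hnorm : 0 < ‖x‖ := norm_pos_iff.mpr hx0
  have hle := hC _ (hx ((|C| + 1) / ‖x‖) (by positivity))
  rw [norm_smul, Real.norm_of_nonneg (by positivity), div_mul_cancel₀ _ hnorm.ne'] at hle
  linarith [le_abs_self C]

theorem le_prod_mul_of_le_mul {α : Type*} [CommSemiring α] [PartialOrder α] [IsOrderedRing α]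
    {v a : ℕ → α} (ha : ∀ t, 0 ≤ a t) (hv : ∀ t, v (t + 1) ≤ a t * v t) (t : ℕ) :
    v t ≤ (∏ k ∈ range t, a k) * v 0 := by
  induction t with
  | zero => simp
  | succ t ih =>
    calc v (t + 1) ≤ a t * v t := hv t
      _ ≤ a t * ((∏ k ∈ range t, a k) * v 0) := mul_le_mul_of_nonneg_left ih (ha t)
      _ = (∏ k ∈ range (t + 1), a k) * v 0 := by rw [prod_range_succ]; ring

section polyGauge

variable {q n : ℕ} (hq : 0 < q) {H : Matrix (Fin q) (Fin n) ℝ} {h : Fin q → ℝ}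

theorem polyGauge_le_iff (hh : ∀ j, 0 < h j) {e : Fin n → ℝ} {c : ℝ} :
    polyGauge hq H h e ≤ c ↔ H *ᵥ e ≤ c • h := by
  refine (sup'_le_iff _ _).trans ?_
  simp only [mem_univ, true_implies, div_le_iff₀ (hh _), Pi.le_def, Pi.smul_apply, smul_eq_mul]

theorem mulVec_le_polyGauge_smul (hh : ∀ j, 0 < h j) (e : Fin n → ℝ) :
    H *ᵥ e ≤ polyGauge hq H h e • h :=
  (polyGauge_le_iff hq hh).mp le_rfl

theorem polyGauge_nonneg (hh : ∀ j, 0 < h j)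
    (hbdd : Bornology.IsBounded {e : Fin n → ℝ | ∀ j, (H *ᵥ e) j ≤ h j}) (e : Fin n → ℝ) :
    0 ≤ polyGauge hq H h e := by
  by_contra! hneg
  have hHe : ∀ j, (H *ᵥ e) j < 0 := fun j =>
    (mulVec_le_polyGauge_smul hq hh e j).trans_lt (mul_neg_of_neg_of_pos hneg (hh j))
  have hray : ∀ c : ℝ, 0 ≤ c → c • e ∈ {e : Fin n → ℝ | ∀ j, (H *ᵥ e) j ≤ h j} := fun c hc j => by
    rw [Matrix.mulVec_smul, Pi.smul_apply, smul_eq_mul]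
    exact (mul_nonpos_of_nonneg_of_nonpos hc (hHe j).le).trans (hh j).le
  have he : e = 0 := eq_zero_of_isBounded_of_forall_smul_mem hbdd hray
  simpa [he] using hHe ⟨0, hq⟩

theorem polyGauge_mulVec_le (hh : ∀ j, 0 < h j) {M : Matrix (Fin n) (Fin n) ℝ} {lam : ℝ}
    {P : Matrix (Fin q) (Fin q) ℝ} (hP : ∀ i j, 0 ≤ P i j) (hPH : P * H = H * M)
    (hPh : P *ᵥ h ≤ lam • h) {e : Fin n → ℝ} (he : 0 ≤ polyGauge hq H h e) :
    polyGauge hq H h (M *ᵥ e) ≤ lam * polyGauge hq H h e := by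
  rw [polyGauge_le_iff hq hh]
  calc H *ᵥ (M *ᵥ e) = P *ᵥ (H *ᵥ e) := by rw [Matrix.mulVec_mulVec, Matrix.mulVec_mulVec, hPH]
    _ ≤ P *ᵥ (polyGauge hq H h e • h) :=
        Matrix.mulVec_mono_of_nonneg hP (mulVec_le_polyGauge_smul hq hh e)
    _ = polyGauge hq H h e • P *ᵥ h := Matrix.mulVec_smul _ _ _
    _ ≤ polyGauge hq H h e • lam • h := smul_le_smul_of_nonneg_left hPh he
    _ = (lam * polyGauge hq H h e) • h := by rw [smul_smul, mul_comm]

end polyGauge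

theorem stmt_6_general (q n : ℕ) (hq : 1 ≤ q)
    (H : Matrix (Fin q) (Fin n) ℝ) (h : Fin q → ℝ) (hh : ∀ j, 0 < h j)
    (hbdd : Bornology.IsBounded {e : Fin n → ℝ | ∀ j, H.mulVec e j ≤ h j})
    (M : ℕ → Matrix (Fin n) (Fin n) ℝ) (lam : ℕ → ℝ)
    (hlam : ∀ t, 0 < lam t ∧ lam t < 1)
    (hdual : ∀ t, ∃ P : Matrix (Fin q) (Fin q) ℝ,
      (∀ i j, 0 ≤ P i j) ∧ P * H = H * (M t) ∧ ∀ j, P.mulVec h j ≤ lam t * h j)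
    (lambar : ℝ)
    (hle : ∀ t, lam t ≤ lambar)
    (e : ℕ → Fin n → ℝ)
    (hdyn : ∀ t, e (t + 1) = (M t).mulVec (e t)) :
    ∀ t : ℕ,
      polyGauge hq H h (e t) ≤
        (∏ k ∈ Finset.range t, lam k) * polyGauge hq H h (e 0) ∧
      (∏ k ∈ Finset.range t, lam k) * polyGauge hq H h (e 0) ≤
        lambar ^ t * polyGauge hq H h (e 0) := by
  have hV : ∀ t, 0 ≤ polyGauge hq H h (e t) := fun t => polyGauge_nonneg hq hh hbdd (e t)
  have hstep : ∀ t, polyGauge hq H h (e (t + 1)) ≤ lam t * polyGauge hq H h (e t) := fun t => by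
    obtain ⟨P, hP, hPH, hPh⟩ := hdual t
    rw [hdyn t]
    exact polyGauge_mulVec_le hq hh hP hPH hPh (hV t)
  have hprod : ∀ t, ∏ k ∈ range t, lam k ≤ lambar ^ t := fun t => by
    simpa using prod_le_prod (s := range t) (fun k _ => (hlam k).1.le) fun k _ => hle k
  intro t
  exact ⟨le_prod_mul_of_le_mul (v := fun t => polyGauge hq H h (e t)) (fun k => (hlam k).1.le)
    hstep t, mul_le_mul_of_nonneg_right (hprod t) (hV 0)⟩

/-- disturbance-free case of Theorem 3: along the switched
closed-loop error dynamics `e(t+1) = M(t)·e(t)`, certified by entrywise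
nonnegative dual matrices, the polyhedral Lyapunov function decays
exponentially with rate bounded by the worst-case contraction factor. -/
theorem stmt_6 (q n : ℕ) (hq : 1 ≤ q) (hn : 1 ≤ n)
    (H : Matrix (Fin q) (Fin n) ℝ) (h : Fin q → ℝ) (hh : ∀ j, 0 < h j)
    (hbdd : Bornology.IsBounded {e : Fin n → ℝ | ∀ j, H.mulVec e j ≤ h j})
    (M : ℕ → Matrix (Fin n) (Fin n) ℝ) (lam : ℕ → ℝ)
    (hlam : ∀ t, 0 < lam t ∧ lam t < 1)
    (hdual : ∀ t, ∃ P : Matrix (Fin q) (Fin q) ℝ,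
      (∀ i j, 0 ≤ P i j) ∧ P * H = H * (M t) ∧ ∀ j, P.mulVec h j ≤ lam t * h j)
    (lambar : ℝ) (hlambar : 0 < lambar ∧ lambar < 1)
    (hle : ∀ t, lam t ≤ lambar)
    (e : ℕ → Fin n → ℝ)
    (hdyn : ∀ t, e (t + 1) = (M t).mulVec (e t)) :
    ∀ t : ℕ,
      polyGauge hq H h (e t) ≤
        (∏ k ∈ Finset.range t, lam k) * polyGauge hq H h (e 0) ∧
      (∏ k ∈ Finset.range t, lam k) * polyGauge hq H h (e 0) ≤
        lambar ^ t * polyGauge hq H h (e 0) :=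
  stmt_6_general q n hq H h hh hbdd M lam hlam hdual lambar hle e hdyn
end
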